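/- arXiv:2407.17784 — 2 statements merged into one kernel-verified Lean document; each statement's English description precedes it below -/
import Mathlib

section
/- Let H = (V, E) be a finite simple graph and let M be a matching on V disjoint from E, i.e., a set of unordered pairs of vertices such that M ∩ E = ∅ and no two distinct pairs in M share a vertex. If the graph G = (V, E ∪ M) obtained from H by adding the edges of M is word-representable, then H is 1-11-representable. -/
/-- The subsequence of `w` consisting of all occurrences of `x` and `y`. -/
def restrictWord {V : Type*} [DecidableEq V] (w : List V) (x y : V) : List V :=
  w.filter (fun z => decide (z = x ∨ z = y))

/-- The number of occurrences of the consecutive pattern 11 in a word: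
the number of indices `i` such that the `i`-th and `(i+1)`-th letters are equal. -/
def pattern11Count {V : Type*} [DecidableEq V] (l : List V) : ℕ :=
  ((l.zip l.tail).filter (fun p => decide (p.1 = p.2))).length

/-- A word `w` over `V` `k`-11-represents the simple graph `G` if every vertex occurs in `w`
and, for all distinct `x y`, `xy` is an edge iff `w|_{x,y}` has at most `k` occurrences of
the pattern 11. -/
def Represents {V : Type*} [DecidableEq V] (k : ℕ) (w : List V) (G : SimpleGraph V) : Prop :=
  (∀ v : V, v ∈ w) ∧
  ∀ x y : V, x ≠ y → (G.Adj x y ↔ pattern11Count (restrictWord w x y) ≤ k)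

/-- A graph is `k`-11-representable if some word `k`-11-represents it. -/
def Representable {V : Type*} [DecidableEq V] (k : ℕ) (G : SimpleGraph V) : Prop :=
  ∃ w : List V, Represents k w G

/-- A word that is a permutation of the vertex set: each vertex occurs exactly once. -/
def IsPermWord {V : Type*} (p : List V) : Prop :=
  p.Nodup ∧ ∀ v : V, v ∈ p

/-- A graph is permutationally `k`-11-representable if some concatenation of permutations
of the vertex set `k`-11-represents it. -/
def PermRepresentable {V : Type*} [DecidableEq V] (k : ℕ) (G : SimpleGraph V) : Prop :=
  ∃ ps : List (List V), (∀ p ∈ ps, IsPermWord p) ∧ Represents k ps.flatten G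

/-!
Let `w` represent `G = H + M` and cut a listing of `V` into blocks, each an edge of `M` or a single
vertex. Concatenating the blocks gives a permutation `π`, concatenating the reversed blocks a
permutation `π'`; they order every pair of vertices alike except the edges of `M`, which they order
oppositely. Then `u = w π π' π' π wᴿ` 1-11-represents `H`. For `xy ∉ M` the middle part restricts
to `(xy)⁴` or `(yx)⁴`, so an edge of `H`, on which `w` alternates, gets exactly one 11, at one of
the two junctions; an edge `ab ∈ M` gets the two 11s of `abbabaab`; and a non-edge of `G` gets at
least one 11 from `w` and one from `wᴿ`.
-/

section Words

variable {V : Type*} [DecidableEq V]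

@[simp] lemma pattern11Count_nil : pattern11Count ([] : List V) = 0 := rfl

@[simp] lemma pattern11Count_singleton (a : V) : pattern11Count [a] = 0 := rfl

@[simp] lemma pattern11Count_cons_cons (a b : V) (l : List V) :
    pattern11Count (a :: b :: l) = (if a = b then 1 else 0) + pattern11Count (b :: l) := by
  by_cases h : a = b <;> simp [pattern11Count, h, Nat.add_comm]

lemma pattern11Count_le_cons (a : V) (l : List V) : pattern11Count l ≤ pattern11Count (a :: l) := by
  cases l <;> simp

lemma pattern11Count_append_cons (A : List V) (c : V) (B : List V) :
    pattern11Count (A ++ c :: B) = pattern11Count (A ++ [c]) + pattern11Count (c :: B) := by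
  induction A with
  | nil => simp
  | cons a A ih =>
    cases A with
    | nil => simp
    | cons a' A => simp only [List.cons_append, pattern11Count_cons_cons] at ih ⊢; omega

lemma pattern11Count_add_le_append (A B : List V) :
    pattern11Count A + pattern11Count B ≤ pattern11Count (A ++ B) := by
  induction A with
  | nil => simp
  | cons a A ih =>
    cases A with
    | nil => simpa using pattern11Count_le_cons a B
    | cons a' A => simp only [List.cons_append, pattern11Count_cons_cons] at ih ⊢; omega

@[simp] lemma pattern11Count_reverse (l : List V) :
    pattern11Count l.reverse = pattern11Count l := by
  induction l with
  | nil => rfl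
  | cons a l ih =>
    cases l with
    | nil => rfl
    | cons b l =>
      rw [List.reverse_cons, List.reverse_cons, List.append_assoc, List.singleton_append,
        pattern11Count_append_cons, ← List.reverse_cons, ih, pattern11Count_cons_cons,
        pattern11Count_cons_cons]
      simp [eq_comm, Nat.add_comm]

lemma pattern11Count_append_append_reverse_le_one {x y : V} (hxy : x ≠ y) {l : List V}
    (hl : ∀ z ∈ l, z = x ∨ z = y) (hl0 : pattern11Count l = 0) :
    pattern11Count (l ++ [x, y, x, y, x, y, x, y] ++ l.reverse) ≤ 1 := by
  rcases List.eq_nil_or_concat' l with rfl | ⟨A, c, rfl⟩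
  · simp [hxy, hxy.symm]
  · set Y := [x, y, x, y, x, y, x, y]
    have hsplit : A ++ [c] ++ Y ++ (A ++ [c]).reverse = A ++ c :: (Y ++ c :: A.reverse) := by
      simp
    have hend : pattern11Count (c :: A.reverse) = 0 := by
      simpa using (pattern11Count_reverse (A ++ [c])).trans hl0
    rw [hsplit, pattern11Count_append_cons, ← List.cons_append,
      pattern11Count_append_cons (c :: Y), hl0, hend]
    rcases hl c (by simp) with rfl | rfl <;> simp [Y, hxy, hxy.symm]

lemma two_mul_add_pattern11Count_le (l m : List V) :
    2 * pattern11Count l + pattern11Count m ≤ pattern11Count (l ++ m ++ l.reverse) := by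
  have h1 := pattern11Count_add_le_append l m
  have h2 := pattern11Count_add_le_append (l ++ m) l.reverse
  rw [pattern11Count_reverse] at h2
  omega

lemma restrictWord_append (u v : List V) (x y : V) :
    restrictWord (u ++ v) x y = restrictWord u x y ++ restrictWord v x y :=
  List.filter_append ..

lemma restrictWord_reverse (w : List V) (x y : V) :
    restrictWord w.reverse x y = (restrictWord w x y).reverse :=
  List.filter_reverse

lemma restrictWord_comm (w : List V) (x y : V) : restrictWord w x y = restrictWord w y x := by
  simp only [restrictWord, or_comm]

lemma mem_restrictWord {w : List V} {x y z : V} :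
    z ∈ restrictWord w x y ↔ z ∈ w ∧ (z = x ∨ z = y) := by
  simp [restrictWord]

lemma restrictWord_eq_nil {w : List V} {x y : V} (hx : x ∉ w) (hy : y ∉ w) :
    restrictWord w x y = [] :=
  List.filter_eq_nil_iff.2 fun z hz => by grind

lemma restrictWord_eq_pair_or_eq_pair {L : List V} {x y : V} (hL : L.Nodup) (hx : x ∈ L)
    (hy : y ∈ L) (hxy : x ≠ y) :
    restrictWord L x y = [x, y] ∨ restrictWord L x y = [y, x] := by
  refine List.perm_pair.1 ((List.perm_ext_iff_of_nodup (hL.filter _) ?_).2 fun z => ?_)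
  · simpa using hxy
  · simp only [List.mem_filter, decide_eq_true_eq, List.mem_pair]
    aesop

lemma restrictWord_flatten_map_reverse_of_not_mem_block (bs : List (List V)) {x y : V}
    (h : ∀ B ∈ bs, ¬ (x ∈ B ∧ y ∈ B)) :
    restrictWord (bs.map List.reverse).flatten x y = restrictWord bs.flatten x y := by
  simp only [restrictWord, List.filter_flatten, List.map_map]
  congr 1
  refine List.map_congr_left fun B hB => ?_
  simp only [Function.comp_apply, List.filter_reverse]
  obtain ⟨c, hc⟩ : ∃ c, ∀ z ∈ B.filter (fun z => decide (z = x ∨ z = y)), z = c := by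
    by_cases hy : y ∈ B
    · exact ⟨y, fun z hz => by grind [h B hB]⟩
    · exact ⟨x, fun z hz => by grind⟩
  rw [List.eq_replicate_iff.2 ⟨rfl, hc⟩, List.reverse_replicate]

lemma restrictWord_flatten_of_mem {bs : List (List V)} {a b : V} (hbs : bs.flatten.Nodup)
    (hab : [a, b] ∈ bs) :
    restrictWord bs.flatten a b = [a, b] ∧
      restrictWord (bs.map List.reverse).flatten a b = [b, a] := by
  obtain ⟨X, Z, rfl⟩ := List.append_of_mem hab
  have hrev (l : List (List V)) (z : V) : z ∈ (l.map List.reverse).flatten ↔ z ∈ l.flatten := by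
    simp only [List.mem_flatten, List.mem_map]
    exact ⟨fun ⟨_, ⟨B, hB, hBz⟩, hz⟩ => ⟨B, hB, List.mem_reverse.1 (hBz ▸ hz)⟩,
      fun ⟨B, hB, hz⟩ => ⟨_, ⟨B, hB, rfl⟩, List.mem_reverse.2 hz⟩⟩
  simp only [List.flatten_append, List.flatten_cons, List.nodup_append, List.nodup_cons] at hbs
  obtain ⟨-, ⟨⟨hab', -⟩, -, hZ⟩, hX⟩ := hbs
  have hne : a ≠ b := by simpa using hab'
  have haX : a ∉ X.flatten := fun h => hX a h a (by simp) rfl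
  have hbX : b ∉ X.flatten := fun h => hX b h b (by simp) rfl
  have haZ : a ∉ Z.flatten := fun h => hZ a (by simp) a h rfl
  have hbZ : b ∉ Z.flatten := fun h => hZ b (by simp) b h rfl
  simp only [List.map_append, List.map_cons, List.flatten_append, List.flatten_cons,
    List.reverse_cons, restrictWord_append, restrictWord_eq_nil haX hbX,
    restrictWord_eq_nil haZ hbZ,
    restrictWord_eq_nil ((hrev X a).not.2 haX) ((hrev X b).not.2 hbX),
    restrictWord_eq_nil ((hrev Z a).not.2 haZ) ((hrev Z b).not.2 hbZ)]
  simp [restrictWord, hne, hne.symm]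

end Words

lemma Sym2.mk_out_fst_out_snd {α : Type*} (e : Sym2 α) : s(e.out.1, e.out.2) = e :=
  Quot.out_eq e

lemma nodup_flatten_map_out {V : Type*} {M : Set (Sym2 V)} {ps : List (Sym2 V)} (hps : ps.Nodup)
    (hpsM : ∀ e ∈ ps, e ∈ M) (hM : ∀ e ∈ M, ¬ e.IsDiag)
    (hmatch : ∀ e ∈ M, ∀ f ∈ M, e ≠ f → ∀ v : V, v ∈ e → v ∉ f) :
    (ps.map fun e => [e.out.1, e.out.2]).flatten.Nodup := by
  have hmem (e : Sym2 V) (z : V) : z ∈ [e.out.1, e.out.2] ↔ z ∈ e := by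
    have := Sym2.mem_iff (a := z) (b := e.out.1) (c := e.out.2)
    rw [Sym2.mk_out_fst_out_snd] at this
    simp [this]
  refine List.nodup_flatten.2 ⟨?_, List.pairwise_map.2 (hps.pairwise_of_forall_ne ?_)⟩
  · simp only [List.mem_map, forall_exists_index, and_imp]
    rintro _ e he rfl
    have := hM e (hpsM e he)
    rw [← Sym2.mk_out_fst_out_snd e, Sym2.mk_isDiag_iff] at this
    simpa using this
  · intro e he f hf hef z hze hzf
    exact hmatch e (hpsM e he) f (hpsM f hf) hef z ((hmem e z).1 hze) ((hmem f z).1 hzf)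

section MatchingBlocks

variable {V : Type*} [DecidableEq V]

structure IsMatchingBlocks (M : Set (Sym2 V)) (bs : List (List V)) : Prop where
  isPermWord : IsPermWord bs.flatten
  exists_block : ∀ e ∈ M, ∃ a b, e = s(a, b) ∧ [a, b] ∈ bs
  mk_mem : ∀ B ∈ bs, ∀ x ∈ B, ∀ y ∈ B, x ≠ y → s(x, y) ∈ M

theorem IsMatchingBlocks.exists [Fintype V] {M : Set (Sym2 V)} (hM : ∀ e ∈ M, ¬ e.IsDiag)
    (hmatch : ∀ e ∈ M, ∀ f ∈ M, e ≠ f → ∀ v : V, v ∈ e → v ∉ f) :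
    ∃ bs, IsMatchingBlocks M bs := by
  set ps := M.toFinite.toFinset.toList
  have hpsM : ∀ e ∈ ps, e ∈ M := by simp [ps]
  set pairs := ps.map fun e => [e.out.1, e.out.2]
  set R := Finset.univ.toList.filter (· ∉ pairs.flatten)
  have hflat : (pairs ++ R.map fun v => [v]).flatten = pairs.flatten ++ R := by
    rw [List.flatten_append]
    congr 1
    rw [← List.flatMap_def, List.flatMap_singleton']
  refine ⟨pairs ++ R.map fun v => [v], ⟨?_, fun v => ?_⟩, fun e he => ?_, ?_⟩
  · rw [hflat, List.nodup_append]
    refine ⟨nodup_flatten_map_out (Finset.nodup_toList _) hpsM hM hmatch,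
      (Finset.nodup_toList _).filter _, fun a ha b hb => ?_⟩
    rintro rfl
    exact of_decide_eq_true (List.mem_filter.1 hb).2 ha
  · rw [hflat, List.mem_append]
    by_cases hv : v ∈ pairs.flatten
    · exact Or.inl hv
    · exact Or.inr (List.mem_filter.2 ⟨Finset.mem_toList.2 (Finset.mem_univ v),
        decide_eq_true hv⟩)
  · exact ⟨e.out.1, e.out.2, (Sym2.mk_out_fst_out_snd e).symm,
      List.mem_append_left _ (List.mem_map_of_mem (by simpa [ps] using he))⟩
  · simp only [List.mem_append, List.mem_map, pairs]
    rintro B (⟨e, he, rfl⟩ | ⟨v, -, rfl⟩) x hx y hy hxy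
    · have hxy_e : s(x, y) = e := by
        rw [← Sym2.mk_out_fst_out_snd e]
        simp only [List.mem_cons, List.not_mem_nil, or_false] at hx hy
        rcases hx with rfl | rfl <;> rcases hy with rfl | rfl <;> simp_all [Sym2.eq_swap]
      exact hxy_e ▸ hpsM e he
    · simp_all

def blockFlipWord (bs : List (List V)) : List V :=
  bs.flatten ++ (bs.map List.reverse).flatten ++ (bs.map List.reverse).flatten ++ bs.flatten

namespace IsMatchingBlocks

variable {M : Set (Sym2 V)} {bs : List (List V)} {x y : V}

lemma restrictWord_blockFlipWord_of_not_mem (hbs : IsMatchingBlocks M bs) (hxy : x ≠ y)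
    (h : s(x, y) ∉ M) :
    restrictWord (blockFlipWord bs) x y = [x, y, x, y, x, y, x, y] ∨
      restrictWord (blockFlipWord bs) x y = [y, x, y, x, y, x, y, x] := by
  have hflip := restrictWord_flatten_map_reverse_of_not_mem_block bs
    fun B hB ⟨hx, hy⟩ => h (hbs.mk_mem B hB x hx y hy hxy)
  simp only [blockFlipWord, restrictWord_append, hflip]
  rcases restrictWord_eq_pair_or_eq_pair hbs.isPermWord.1 (hbs.isPermWord.2 x)
    (hbs.isPermWord.2 y) hxy with h | h <;> simp [h]

lemma two_le_pattern11Count_restrictWord_blockFlipWord (hbs : IsMatchingBlocks M bs)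
    (hxy : x ≠ y) (h : s(x, y) ∈ M) :
    2 ≤ pattern11Count (restrictWord (blockFlipWord bs) x y) := by
  obtain ⟨a, b, hab, hblock⟩ := hbs.exists_block _ h
  have hrestrict : restrictWord (blockFlipWord bs) x y = restrictWord (blockFlipWord bs) a b := by
    rcases Sym2.eq_iff.1 hab with ⟨rfl, rfl⟩ | ⟨rfl, rfl⟩
    · rfl
    · exact restrictWord_comm ..
  have hne : a ≠ b := by
    rcases Sym2.eq_iff.1 hab with ⟨rfl, rfl⟩ | ⟨rfl, rfl⟩
    exacts [hxy, hxy.symm]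
  obtain ⟨h₁, h₂⟩ := restrictWord_flatten_of_mem hbs.isPermWord.1 hblock
  rw [hrestrict]
  simp only [blockFlipWord, restrictWord_append, h₁, h₂]
  simp [hne, hne.symm]

lemma pattern11Count_sandwich_le_one (hbs : IsMatchingBlocks M bs) (hxy : x ≠ y)
    (h : s(x, y) ∉ M) {l : List V} (hl : ∀ z ∈ l, z = x ∨ z = y) (hl0 : pattern11Count l = 0) :
    pattern11Count (l ++ restrictWord (blockFlipWord bs) x y ++ l.reverse) ≤ 1 := by
  rcases hbs.restrictWord_blockFlipWord_of_not_mem hxy h with hP | hP <;> rw [hP]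
  · exact pattern11Count_append_append_reverse_le_one hxy hl hl0
  · exact pattern11Count_append_append_reverse_le_one hxy.symm (fun z hz => (hl z hz).symm) hl0

end IsMatchingBlocks

end MatchingBlocks

/-- if `M` is a matching on `V` disjoint from the edge set of `H` (a set of
unordered pairs of distinct vertices, no two of which share a vertex), and the graph `G`
obtained from `H` by adding the edges of `M` is word-representable, then `H` is
1-11-representable. -/
theorem stmt2 {V : Type*} [Fintype V] [DecidableEq V] (H : SimpleGraph V)
    (M : Set (Sym2 V))
    (hM : ∀ e ∈ M, ¬ e.IsDiag)
    (hME : M ∩ H.edgeSet = ∅)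
    (hmatch : ∀ e ∈ M, ∀ f ∈ M, e ≠ f → ∀ v : V, v ∈ e → v ∉ f)
    (hG : Representable 0 (SimpleGraph.fromEdgeSet (H.edgeSet ∪ M))) :
    Representable 1 H := by
  obtain ⟨w, hw_mem, hw⟩ := hG
  obtain ⟨bs, hbs⟩ := IsMatchingBlocks.exists hM hmatch
  refine ⟨w ++ blockFlipWord bs ++ w.reverse, fun v => by simp [hw_mem v], fun x y hxy => ?_⟩
  set l := restrictWord w x y with hl_def
  have hres : restrictWord (w ++ blockFlipWord bs ++ w.reverse) x y =
      l ++ restrictWord (blockFlipWord bs) x y ++ l.reverse := by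
    simp only [restrictWord_append, restrictWord_reverse, l]
  rw [hres]
  by_cases hxyM : s(x, y) ∈ M
  · have hH : ¬ H.Adj x y := fun hadj => (Set.eq_empty_iff_forall_notMem.1 hME) _ ⟨hxyM, hadj⟩
    have := hbs.two_le_pattern11Count_restrictWord_blockFlipWord hxy hxyM
    have := two_mul_add_pattern11Count_le l (restrictWord (blockFlipWord bs) x y)
    simp only [hH, false_iff, not_le]
    omega
  · have hGH : (SimpleGraph.fromEdgeSet (H.edgeSet ∪ M)).Adj x y ↔ H.Adj x y := by
      simp [SimpleGraph.fromEdgeSet_adj, hxyM, hxy]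
    have hl : ∀ z ∈ l, z = x ∨ z = y := fun z hz => (mem_restrictWord.1 hz).2
    rw [← hGH, hw x y hxy, ← hl_def]
    refine ⟨fun hl0 => hbs.pattern11Count_sandwich_le_one hxy hxyM hl (by omega), fun h1 => ?_⟩
    have := two_mul_add_pattern11Count_le l (restrictWord (blockFlipWord bs) x y)
    omega
end

section
/- For every vertex v of the Chvátal graph, the graph obtained from the Chvátal graph by deleting v (and all edges incident to it) is not a comparability graph. -/
/-- The edges of the Chvátal graph, with vertices labelled 1,…,12. -/
def chvatalEdgeList : List (ℕ × ℕ) :=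
  [(1,2),(1,4),(1,7),(1,12),(2,3),(2,6),(2,9),(3,4),(3,8),(3,11),(4,5),(4,10),
   (5,6),(5,9),(5,12),(6,7),(6,10),(7,8),(7,11),(8,9),(8,12),(9,10),(10,11),(11,12)]

/-- The Chvátal graph on `Fin 12`, where the vertex `x : Fin 12` carries the label `x+1`. -/
def chvatalGraph : SimpleGraph (Fin 12) :=
  SimpleGraph.fromRel (fun x y => (x.val + 1, y.val + 1) ∈ chvatalEdgeList)

/-- A graph is a comparability graph if there is a strict partial order on its vertex set
such that two distinct vertices are adjacent iff they are comparable in the order. -/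
def IsComparabilityGraph {V : Type*} (G : SimpleGraph V) : Prop :=
  ∃ lt : V → V → Prop,
    (∀ a b c : V, lt a b → lt b c → lt a c) ∧
    (∀ a : V, ¬ lt a a) ∧
    (∀ a b : V, a ≠ b → (G.Adj a b ↔ (lt a b ∨ lt b a)))


instance chvatalDec : DecidableRel chvatalGraph.Adj := fun a b =>
  decidable_of_iff (a ≠ b ∧ (((a.val + 1, b.val + 1) ∈ chvatalEdgeList) ∨
    ((b.val + 1, a.val + 1) ∈ chvatalEdgeList))) Iff.rfl

instance (v : Fin 12) : DecidableRel (chvatalGraph.induce {x : Fin 12 | x ≠ v}).Adj :=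
  fun a b => decidable_of_iff (chvatalGraph.Adj a.val b.val) Iff.rfl

theorem noC5 {V : Type*} (G : SimpleGraph V) (a b c d e : V)
    (nab : a ≠ b) (nbc : b ≠ c) (ncd : c ≠ d) (nde : d ≠ e) (nea : e ≠ a)
    (nac : a ≠ c) (nbd : b ≠ d) (nce : c ≠ e) (nda : d ≠ a) (neb : e ≠ b)
    (hab : G.Adj a b) (hbc : G.Adj b c) (hcd : G.Adj c d) (hde : G.Adj d e) (hea : G.Adj e a)
    (hac : ¬ G.Adj a c) (hbd : ¬ G.Adj b d) (hce : ¬ G.Adj c e) (hda : ¬ G.Adj d a)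
    (heb : ¬ G.Adj e b) : ¬ IsComparabilityGraph G := by
  rintro ⟨lt, htr, -, hiff⟩
  rcases (hiff a b nab).mp hab with h1 | h1 <;>
  rcases (hiff b c nbc).mp hbc with h2 | h2 <;>
  rcases (hiff c d ncd).mp hcd with h3 | h3 <;>
  rcases (hiff d e nde).mp hde with h4 | h4 <;>
  rcases (hiff e a nea).mp hea with h5 | h5 <;>
  first
  | exact hac ((hiff a c nac).mpr (Or.inl (htr _ _ _ h1 h2)))
  | exact hac ((hiff a c nac).mpr (Or.inr (htr _ _ _ h2 h1)))
  | exact hbd ((hiff b d nbd).mpr (Or.inl (htr _ _ _ h2 h3)))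
  | exact hbd ((hiff b d nbd).mpr (Or.inr (htr _ _ _ h3 h2)))
  | exact hce ((hiff c e nce).mpr (Or.inl (htr _ _ _ h3 h4)))
  | exact hce ((hiff c e nce).mpr (Or.inr (htr _ _ _ h4 h3)))
  | exact hda ((hiff d a nda).mpr (Or.inl (htr _ _ _ h4 h5)))
  | exact hda ((hiff d a nda).mpr (Or.inr (htr _ _ _ h5 h4)))
  | exact heb ((hiff e b neb).mpr (Or.inl (htr _ _ _ h5 h1)))
  | exact heb ((hiff e b neb).mpr (Or.inr (htr _ _ _ h1 h5)))

/-- for every vertex `v` of the Chvátal graph, the graph obtained by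
deleting `v` (the subgraph induced by the remaining vertices) is not a comparability
graph. -/
theorem stmt16 :
    ∀ v : Fin 12, ¬ IsComparabilityGraph (chvatalGraph.induce {x : Fin 12 | x ≠ v}) := by
  intro v
  fin_cases v
  · exact noC5 _ ⟨1, by decide⟩ ⟨2, by decide⟩ ⟨3, by decide⟩ ⟨4, by decide⟩ ⟨5, by decide⟩
      (by decide) (by decide) (by decide) (by decide) (by decide)
      (by decide) (by decide) (by decide) (by decide) (by decide)
      (by decide) (by decide) (by decide) (by decide) (by decide)
      (by decide) (by decide) (by decide) (by decide) (by decide)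
  · exact noC5 _ ⟨0, by decide⟩ ⟨3, by decide⟩ ⟨2, by decide⟩ ⟨7, by decide⟩ ⟨6, by decide⟩
      (by decide) (by decide) (by decide) (by decide) (by decide)
      (by decide) (by decide) (by decide) (by decide) (by decide)
      (by decide) (by decide) (by decide) (by decide) (by decide)
      (by decide) (by decide) (by decide) (by decide) (by decide)
  · exact noC5 _ ⟨0, by decide⟩ ⟨1, by decide⟩ ⟨5, by decide⟩ ⟨4, by decide⟩ ⟨3, by decide⟩
      (by decide) (by decide) (by decide) (by decide) (by decide)
      (by decide) (by decide) (by decide) (by decide) (by decide)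
      (by decide) (by decide) (by decide) (by decide) (by decide)
      (by decide) (by decide) (by decide) (by decide) (by decide)
  · exact noC5 _ ⟨0, by decide⟩ ⟨1, by decide⟩ ⟨2, by decide⟩ ⟨7, by decide⟩ ⟨6, by decide⟩
      (by decide) (by decide) (by decide) (by decide) (by decide)
      (by decide) (by decide) (by decide) (by decide) (by decide)
      (by decide) (by decide) (by decide) (by decide) (by decide)
      (by decide) (by decide) (by decide) (by decide) (by decide)
  · exact noC5 _ ⟨0, by decide⟩ ⟨1, by decide⟩ ⟨2, by decide⟩ ⟨7, by decide⟩ ⟨6, by decide⟩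
      (by decide) (by decide) (by decide) (by decide) (by decide)
      (by decide) (by decide) (by decide) (by decide) (by decide)
      (by decide) (by decide) (by decide) (by decide) (by decide)
      (by decide) (by decide) (by decide) (by decide) (by decide)
  · exact noC5 _ ⟨0, by decide⟩ ⟨1, by decide⟩ ⟨2, by decide⟩ ⟨7, by decide⟩ ⟨6, by decide⟩
      (by decide) (by decide) (by decide) (by decide) (by decide)
      (by decide) (by decide) (by decide) (by decide) (by decide)
      (by decide) (by decide) (by decide) (by decide) (by decide)
      (by decide) (by decide) (by decide) (by decide) (by decide)
  · exact noC5 _ ⟨0, by decide⟩ ⟨1, by decide⟩ ⟨2, by decide⟩ ⟨7, by decide⟩ ⟨11, by decide⟩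
      (by decide) (by decide) (by decide) (by decide) (by decide)
      (by decide) (by decide) (by decide) (by decide) (by decide)
      (by decide) (by decide) (by decide) (by decide) (by decide)
      (by decide) (by decide) (by decide) (by decide) (by decide)
  · exact noC5 _ ⟨0, by decide⟩ ⟨1, by decide⟩ ⟨2, by decide⟩ ⟨10, by decide⟩ ⟨6, by decide⟩
      (by decide) (by decide) (by decide) (by decide) (by decide)
      (by decide) (by decide) (by decide) (by decide) (by decide)
      (by decide) (by decide) (by decide) (by decide) (by decide)
      (by decide) (by decide) (by decide) (by decide) (by decide)
  · exact noC5 _ ⟨0, by decide⟩ ⟨1, by decide⟩ ⟨2, by decide⟩ ⟨7, by decide⟩ ⟨6, by decide⟩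
      (by decide) (by decide) (by decide) (by decide) (by decide)
      (by decide) (by decide) (by decide) (by decide) (by decide)
      (by decide) (by decide) (by decide) (by decide) (by decide)
      (by decide) (by decide) (by decide) (by decide) (by decide)
  · exact noC5 _ ⟨0, by decide⟩ ⟨1, by decide⟩ ⟨2, by decide⟩ ⟨7, by decide⟩ ⟨6, by decide⟩
      (by decide) (by decide) (by decide) (by decide) (by decide)
      (by decide) (by decide) (by decide) (by decide) (by decide)
      (by decide) (by decide) (by decide) (by decide) (by decide)
      (by decide) (by decide) (by decide) (by decide) (by decide)
  · exact noC5 _ ⟨0, by decide⟩ ⟨1, by decide⟩ ⟨2, by decide⟩ ⟨7, by decide⟩ ⟨6, by decide⟩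
      (by decide) (by decide) (by decide) (by decide) (by decide)
      (by decide) (by decide) (by decide) (by decide) (by decide)
      (by decide) (by decide) (by decide) (by decide) (by decide)
      (by decide) (by decide) (by decide) (by decide) (by decide)
  · exact noC5 _ ⟨0, by decide⟩ ⟨1, by decide⟩ ⟨2, by decide⟩ ⟨7, by decide⟩ ⟨6, by decide⟩
      (by decide) (by decide) (by decide) (by decide) (by decide)
      (by decide) (by decide) (by decide) (by decide) (by decide)
      (by decide) (by decide) (by decide) (by decide) (by decide)
      (by decide) (by decide) (by decide) (by decide) (by decide)
end
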